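/- arXiv:0810.2393 — 5 statements merged into one kernel-verified Lean document; each statement's English description precedes it below -/
import Mathlib

section
/- Let (V, d) be a ℤ/2-graded dg vector space over a field k of characteristic zero, let B be a bilinear form on V compatible with d, and let (t, s) be an almost Hodge decomposition of (V, d, B). Then the operator A := d∘s + s∘d satisfies A∘t = t∘A = 0, so A restricts to an automorphism of ker t, and one may define the Green operator G : V → V to be the inverse of A on ker t and 0 on im t. The operator G commutes with d (G∘d = d∘G), satisfies G∘t = t∘G = 0 and G∘s = s∘G, the identity (s∘G)∘d + d∘(s∘G) = 1 − t holds, and the pair (t, s∘G) is a genuine Hodge decomposition of (V, d, B). -/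
/-!
Let `A = d s + s d` be the Laplacian. Since `d² = s² = 0`, `A` commutes with `d` and `s`; it
also commutes with `t`, and `A t = t A = 0`. Hence the unit `A + t` commutes with `d`, `s`, `t`,
and so does `G = (A + t)⁻¹ - t`, which inverts `A` on `ker t` and vanishes on `im t`. The Hodge
identities for `(t, s G)` are then formal: `(s G) d + d (s G) = A G = 1 - t` and
`(s G)² = s² G² = 0`. Parity and `B`-symmetry pass from `A + t` to its inverse and then to `G`;
`A` itself is `B`-self-adjoint because the signs in the compatibility rules for `d` and for `s`
cancel in `d s` and `s d`.
-/

open LinearMap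
open scoped Ring

section Ring

variable {R : Type*} [Ring R]

theorem Commute.ringInverse_right {a b : R} (h : Commute a b) (hb : IsUnit b) :
    Commute a b⁻¹ʳ := by
  obtain ⟨u, rfl⟩ := hb
  rw [Ring.inverse_unit]
  exact h.units_inv_right

theorem commute_mul_add_mul_of_mul_self_eq_zero {a b : R} (ha : a * a = 0) :
    Commute a (a * b + b * a) := by
  rw [Commute, SemiconjBy, mul_add, add_mul, ← mul_assoc, ha, zero_mul, zero_add,
    mul_assoc b, ha, mul_zero, add_zero, mul_assoc]

noncomputable def greenOperator (a t : R) : R := (a + t)⁻¹ʳ - t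

section GreenOperator

variable {a t : R}

theorem inverse_add_mul_of_mul_eq_zero (ht : IsIdempotentElem t) (hat : a * t = 0)
    (hu : IsUnit (a + t)) : (a + t)⁻¹ʳ * t = t :=
  (Ring.inverse_mul_eq_iff_eq_mul _ _ _ hu).2 (by rw [add_mul, hat, zero_add, ht.eq])

theorem mul_inverse_add_of_mul_eq_zero (ht : IsIdempotentElem t) (hta : t * a = 0)
    (hu : IsUnit (a + t)) : t * (a + t)⁻¹ʳ = t :=
  ((Ring.eq_mul_inverse_iff_mul_eq _ _ _ hu).2 (by rw [mul_add, hta, zero_add, ht.eq])).symm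

theorem greenOperator_mul_eq_zero (ht : IsIdempotentElem t) (hat : a * t = 0)
    (hu : IsUnit (a + t)) : greenOperator a t * t = 0 := by
  rw [greenOperator, sub_mul, inverse_add_mul_of_mul_eq_zero ht hat hu, ht.eq, sub_self]

theorem mul_greenOperator_eq_zero (ht : IsIdempotentElem t) (hta : t * a = 0)
    (hu : IsUnit (a + t)) : t * greenOperator a t = 0 := by
  rw [greenOperator, mul_sub, mul_inverse_add_of_mul_eq_zero ht hta hu, ht.eq, sub_self]

theorem mul_greenOperator (ht : IsIdempotentElem t) (hat : a * t = 0) (hta : t * a = 0)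
    (hu : IsUnit (a + t)) : a * greenOperator a t = 1 - t :=
  calc a * greenOperator a t = (a + t - t) * (a + t)⁻¹ʳ - a * t := by
        rw [greenOperator, mul_sub, add_sub_cancel_right]
    _ = 1 - t := by
        rw [sub_mul, Ring.mul_inverse_cancel _ hu, mul_inverse_add_of_mul_eq_zero ht hta hu,
          hat, sub_zero]

theorem greenOperator_mul (ht : IsIdempotentElem t) (hat : a * t = 0) (hta : t * a = 0)
    (hu : IsUnit (a + t)) : greenOperator a t * a = 1 - t :=
  calc greenOperator a t * a = (a + t)⁻¹ʳ * (a + t - t) - t * a := by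
        rw [greenOperator, sub_mul, add_sub_cancel_right]
    _ = 1 - t := by
        rw [mul_sub, Ring.inverse_mul_cancel _ hu, inverse_add_mul_of_mul_eq_zero ht hat hu,
          hta, sub_zero]

theorem Commute.greenOperator_right {x : R} (hxa : Commute x a) (hxt : Commute x t)
    (hu : IsUnit (a + t)) : Commute x (greenOperator a t) :=
  ((hxa.add_right hxt).ringInverse_right hu).sub_right hxt

end GreenOperator

/-- An almost Hodge decomposition `(t, s)` for `d`, forgetting the grading and the form. -/
structure IsAlmostHodge (d s t : R) : Prop where
  mul_self_eq_zero : s * s = 0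
  commute : Commute d t
  isIdempotentElem : IsIdempotentElem t
  mul_idem_eq_zero : s * t = 0
  idem_mul_eq_zero : t * s = 0
  isUnit : IsUnit (d * s + s * d + t)

namespace IsAlmostHodge

variable {d s t : R}

theorem laplacian_mul_eq_zero (h : IsAlmostHodge d s t) : (d * s + s * d) * t = 0 := by
  rw [add_mul, mul_assoc, h.mul_idem_eq_zero, mul_zero, zero_add, mul_assoc, h.commute.eq,
    ← mul_assoc, h.mul_idem_eq_zero, zero_mul]

theorem mul_laplacian_eq_zero (h : IsAlmostHodge d s t) : t * (d * s + s * d) = 0 := by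
  rw [mul_add, ← mul_assoc, ← h.commute.eq, mul_assoc, h.idem_mul_eq_zero, mul_zero, zero_add,
    ← mul_assoc, h.idem_mul_eq_zero, zero_mul]

theorem greenOperator_mul_eq_zero (h : IsAlmostHodge d s t) :
    greenOperator (d * s + s * d) t * t = 0 :=
  _root_.greenOperator_mul_eq_zero h.isIdempotentElem h.laplacian_mul_eq_zero h.isUnit

theorem mul_greenOperator_eq_zero (h : IsAlmostHodge d s t) :
    t * greenOperator (d * s + s * d) t = 0 :=
  _root_.mul_greenOperator_eq_zero h.isIdempotentElem h.mul_laplacian_eq_zero h.isUnit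

theorem laplacian_mul_greenOperator (h : IsAlmostHodge d s t) :
    (d * s + s * d) * greenOperator (d * s + s * d) t = 1 - t :=
  mul_greenOperator h.isIdempotentElem h.laplacian_mul_eq_zero h.mul_laplacian_eq_zero h.isUnit

theorem greenOperator_mul_laplacian (h : IsAlmostHodge d s t) :
    greenOperator (d * s + s * d) t * (d * s + s * d) = 1 - t :=
  greenOperator_mul h.isIdempotentElem h.laplacian_mul_eq_zero h.mul_laplacian_eq_zero h.isUnit

theorem commute_differential_greenOperator (h : IsAlmostHodge d s t) (hd : d * d = 0) :
    Commute d (greenOperator (d * s + s * d) t) :=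
  (commute_mul_add_mul_of_mul_self_eq_zero hd).greenOperator_right h.commute h.isUnit

theorem commute_homotopy_greenOperator (h : IsAlmostHodge d s t) :
    Commute s (greenOperator (d * s + s * d) t) := by
  refine Commute.greenOperator_right ?_ (h.mul_idem_eq_zero.trans h.idem_mul_eq_zero.symm)
    h.isUnit
  rw [add_comm]
  exact commute_mul_add_mul_of_mul_self_eq_zero h.mul_self_eq_zero

theorem homotopy_mul_greenOperator (h : IsAlmostHodge d s t) (hd : d * d = 0) :
    s * greenOperator (d * s + s * d) t * d + d * (s * greenOperator (d * s + s * d) t) =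
      1 - t := by
  rw [mul_assoc, ← (h.commute_differential_greenOperator hd).eq, ← mul_assoc, ← mul_assoc,
    ← add_mul, add_comm, h.laplacian_mul_greenOperator]

theorem mul_greenOperator_mul_self (h : IsAlmostHodge d s t) :
    s * greenOperator (d * s + s * d) t * (s * greenOperator (d * s + s * d) t) = 0 := by
  rw [mul_assoc, ← mul_assoc _ s, ← h.commute_homotopy_greenOperator.eq, ← mul_assoc,
    ← mul_assoc, h.mul_self_eq_zero, zero_mul, zero_mul]

end IsAlmostHodge

end Ring

section Graded

variable {k V : Type*} [CommRing k] [AddCommGroup V] [Module k V]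

theorem Module.End.apply_ringInverse_apply {f : Module.End k V} (hf : IsUnit f) (x : V) :
    f (f⁻¹ʳ x) = x :=
  LinearMap.congr_fun (Ring.mul_inverse_cancel f hf) x

theorem Module.End.apply_apply_of_mul_eq_one_sub {f g t : Module.End k V} (h : f * g = 1 - t)
    {x : V} (hx : x ∈ ker t) : f (g x) = x := by
  simpa [mem_ker.1 hx] using LinearMap.congr_fun h x

theorem Submodule.mem_of_apply_mem_of_isCompl {p q : Submodule k V} (hpq : IsCompl p q)
    {f : V →ₗ[k] V} (hf : Function.Injective f) (hp : ∀ x ∈ p, f x ∈ p) (hq : ∀ x ∈ q, f x ∈ q)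
    {x : V} (hx : f x ∈ p) : x ∈ p := by
  obtain ⟨a, ha, b, hb, rfl⟩ := Submodule.mem_sup.1 (hpq.sup_eq_top ▸ Submodule.mem_top : x ∈ p ⊔ q)
  have hfb : f b = 0 := Submodule.disjoint_def.1 hpq.disjoint _
    (by simpa using p.sub_mem hx (hp a ha)) (hq b hb)
  have hb0 : b = 0 := hf (by rw [hfb, map_zero])
  simpa [hb0] using ha

namespace LinearMap

def IsEven (f : V →ₗ[k] V) (V0 V1 : Submodule k V) : Prop :=
  (∀ x ∈ V0, f x ∈ V0) ∧ ∀ x ∈ V1, f x ∈ V1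

def IsOdd (f : V →ₗ[k] V) (V0 V1 : Submodule k V) : Prop :=
  (∀ x ∈ V0, f x ∈ V1) ∧ ∀ x ∈ V1, f x ∈ V0

variable {f g : V →ₗ[k] V} {V0 V1 : Submodule k V}

theorem IsOdd.mul (hf : f.IsOdd V0 V1) (hg : g.IsOdd V0 V1) : (f * g).IsEven V0 V1 :=
  ⟨fun x hx ↦ hf.2 _ (hg.1 x hx), fun x hx ↦ hf.1 _ (hg.2 x hx)⟩

theorem IsOdd.mul_isEven (hf : f.IsOdd V0 V1) (hg : g.IsEven V0 V1) : (f * g).IsOdd V0 V1 :=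
  ⟨fun x hx ↦ hf.1 _ (hg.1 x hx), fun x hx ↦ hf.2 _ (hg.2 x hx)⟩

theorem IsEven.add (hf : f.IsEven V0 V1) (hg : g.IsEven V0 V1) : (f + g).IsEven V0 V1 :=
  ⟨fun x hx ↦ V0.add_mem (hf.1 x hx) (hg.1 x hx), fun x hx ↦ V1.add_mem (hf.2 x hx) (hg.2 x hx)⟩

theorem IsEven.sub (hf : f.IsEven V0 V1) (hg : g.IsEven V0 V1) : (f - g).IsEven V0 V1 :=
  ⟨fun x hx ↦ V0.sub_mem (hf.1 x hx) (hg.1 x hx), fun x hx ↦ V1.sub_mem (hf.2 x hx) (hg.2 x hx)⟩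

theorem IsEven.ringInverse (hV : IsCompl V0 V1) (hf : f.IsEven V0 V1) :
    (f⁻¹ʳ).IsEven V0 V1 := by
  by_cases hu : IsUnit f
  · have hinj := ((Module.End.isUnit_iff f).1 hu).injective
    refine ⟨fun x hx ↦ ?_, fun x hx ↦ ?_⟩
    · refine Submodule.mem_of_apply_mem_of_isCompl hV hinj hf.1 hf.2 ?_
      rwa [Module.End.apply_ringInverse_apply hu]
    · refine Submodule.mem_of_apply_mem_of_isCompl hV.symm hinj hf.2 hf.1 ?_
      rwa [Module.End.apply_ringInverse_apply hu]
  · rw [Ring.inverse_non_unit f hu]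
    exact ⟨fun _ _ ↦ V0.zero_mem, fun _ _ ↦ V1.zero_mem⟩

variable {B : V →ₗ[k] V →ₗ[k] k}

theorem isAdjointPair_of_codisjoint (hV : Codisjoint V0 V1)
    (h0 : ∀ x ∈ V0, ∀ y, B (f x) y = B x (g y)) (h1 : ∀ x ∈ V1, ∀ y, B (f x) y = B x (g y)) :
    IsAdjointPair B B f g := by
  rw [isAdjointPair_iff_comp_eq_compl₂, ← sub_eq_zero, ← ker_eq_top, eq_top_iff, ← hV.eq_top]
  exact sup_le (fun x hx ↦ ext fun y ↦ by simp [h0 x hx y])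
    (fun x hx ↦ ext fun y ↦ by simp [h1 x hx y])

theorem IsAdjointPair.ringInverse (h : IsAdjointPair B B f g) (hf : IsUnit f) (hg : IsUnit g) :
    IsAdjointPair B B ⇑(f⁻¹ʳ) ⇑(g⁻¹ʳ) := fun x y ↦
  calc B (f⁻¹ʳ x) y = B (f⁻¹ʳ x) (g (g⁻¹ʳ y)) := by rw [Module.End.apply_ringInverse_apply hg]
    _ = B (f (f⁻¹ʳ x)) (g⁻¹ʳ y) := (h _ _).symm
    _ = B x (g⁻¹ʳ y) := by rw [Module.End.apply_ringInverse_apply hf]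

end LinearMap

/-- `B (f x) y = (-1) ^ |x| * ε * B x (f y)` for homogeneous `x`; the compatibility conditions
say this for `s` with `ε = 1` and for `d` with `ε = -1`. -/
def IsGradedSelfAdjoint (B : V →ₗ[k] V →ₗ[k] k) (V0 V1 : Submodule k V) (ε : k)
    (f : V →ₗ[k] V) : Prop :=
  (∀ x ∈ V0, ∀ y, B (f x) y = ε * B x (f y)) ∧ ∀ x ∈ V1, ∀ y, B (f x) y = -ε * B x (f y)

namespace IsGradedSelfAdjoint

variable {B : V →ₗ[k] V →ₗ[k] k} {V0 V1 : Submodule k V} {ε : k} {f g : V →ₗ[k] V}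

theorem isAdjointPair_mul (hV : Codisjoint V0 V1) (hε : ε * ε = 1)
    (hf : IsGradedSelfAdjoint B V0 V1 ε f) (hg : IsGradedSelfAdjoint B V0 V1 (-ε) g)
    (hg_odd : g.IsOdd V0 V1) : IsAdjointPair B B (f * g) (g * f) :=
  isAdjointPair_of_codisjoint hV
    (fun x hx y ↦ by
      rw [Module.End.mul_apply, Module.End.mul_apply, hf.2 _ (hg_odd.1 x hx), hg.1 x hx]
      linear_combination B x (g (f y)) * hε)
    (fun x hx y ↦ by
      rw [Module.End.mul_apply, Module.End.mul_apply, hf.1 _ (hg_odd.2 x hx), hg.2 x hx]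
      linear_combination B x (g (f y)) * hε)

theorem mul (hf : IsGradedSelfAdjoint B V0 V1 ε f) (hg : IsAdjointPair B B g g)
    (hg_even : g.IsEven V0 V1) (hfg : Commute f g) : IsGradedSelfAdjoint B V0 V1 ε (f * g) := by
  refine ⟨fun x hx y ↦ ?_, fun x hx y ↦ ?_⟩
  · rw [Module.End.mul_apply, hf.1 _ (hg_even.1 x hx), hg, ← Module.End.mul_apply g, ← hfg.eq]
  · rw [Module.End.mul_apply, hf.2 _ (hg_even.2 x hx), hg, ← Module.End.mul_apply g, ← hfg.eq]

theorem isAdjointPair_laplacian {d s : V →ₗ[k] V} (hV : Codisjoint V0 V1)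
    (hd : IsGradedSelfAdjoint B V0 V1 (-1) d) (hs : IsGradedSelfAdjoint B V0 V1 1 s)
    (hd_odd : d.IsOdd V0 V1) (hs_odd : s.IsOdd V0 V1) :
    IsAdjointPair B B ⇑(d * s + s * d) ⇑(d * s + s * d) := by
  have hds := hd.isAdjointPair_mul hV (by norm_num) (by rwa [neg_neg]) hs_odd
  have hsd := hs.isAdjointPair_mul hV (by norm_num) hd hd_odd
  have hsum := hds.add hsd
  rwa [add_comm ⇑(s * d)] at hsum

end IsGradedSelfAdjoint

end Graded

theorem almost_hodge_decomposition_correction_general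
    {k V : Type*} [Field k] [AddCommGroup V] [Module k V]
    -- ℤ/2-grading: V = V₀ ⊕ V₁
    (V0 V1 : Submodule k V) (hgr : IsCompl V0 V1)
    -- the differential: odd, square zero
    (d : V →ₗ[k] V) (hd2 : d ∘ₗ d = 0)
    (hd01 : ∀ x ∈ V0, d x ∈ V1) (hd10 : ∀ x ∈ V1, d x ∈ V0)
    -- bilinear form compatible with d
    (B : V →ₗ[k] V →ₗ[k] k)
    (hBd0 : ∀ x ∈ V0, ∀ y, B (d x) y + B x (d y) = 0)
    (hBd1 : ∀ x ∈ V1, ∀ y, B (d x) y - B x (d y) = 0)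
    -- almost Hodge decomposition (t, s): t even, s odd,
    -- conditions (1), (2), (4), (5), (6), (7), and d∘s + s∘d + t invertible
    (t s : V →ₗ[k] V)
    (ht0 : ∀ x ∈ V0, t x ∈ V0) (ht1 : ∀ x ∈ V1, t x ∈ V1)
    (hs01 : ∀ x ∈ V0, s x ∈ V1) (hs10 : ∀ x ∈ V1, s x ∈ V0)
    (h1 : s ∘ₗ s = 0)
    (h2a : ∀ x ∈ V0, ∀ y, B (s x) y = B x (s y))
    (h2b : ∀ x ∈ V1, ∀ y, B (s x) y = - B x (s y))
    (h4 : d ∘ₗ t = t ∘ₗ d)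
    (h5 : ∀ x y, B (t x) y = B x (t y))
    (h6 : t ∘ₗ t = t)
    (h7a : s ∘ₗ t = 0) (h7b : t ∘ₗ s = 0)
    (hinv : IsUnit (d ∘ₗ s + s ∘ₗ d + t : Module.End k V)) :
    -- A := d∘s + s∘d annihilates and is annihilated by t, hence restricts to ker t
    (d ∘ₗ s + s ∘ₗ d) ∘ₗ t = 0 ∧ t ∘ₗ (d ∘ₗ s + s ∘ₗ d) = 0 ∧
    (∀ x ∈ LinearMap.ker t, (d ∘ₗ s + s ∘ₗ d) x ∈ LinearMap.ker t) ∧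
    -- the Green operator G exists
    ∃ G : V →ₗ[k] V,
      -- G is inverse to A on ker t (so A restricts to an automorphism of ker t)
      (∀ x ∈ LinearMap.ker t, G x ∈ LinearMap.ker t) ∧
      (∀ x ∈ LinearMap.ker t, (d ∘ₗ s + s ∘ₗ d) (G x) = x) ∧
      (∀ x ∈ LinearMap.ker t, G ((d ∘ₗ s + s ∘ₗ d) x) = x) ∧
      -- G is zero on im t
      (∀ x ∈ LinearMap.range t, G x = 0) ∧
      -- G commutes with d, kills t, commutes with s
      G ∘ₗ d = d ∘ₗ G ∧ G ∘ₗ t = 0 ∧ t ∘ₗ G = 0 ∧ G ∘ₗ s = s ∘ₗ G ∧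
      -- the corrected homotopy identity
      (s ∘ₗ G) ∘ₗ d + d ∘ₗ (s ∘ₗ G) = LinearMap.id - t ∧
      -- (t, s∘G) is a genuine Hodge decomposition: s∘G is odd and
      -- conditions (1)-(7) hold with s replaced by s∘G
      (∀ x ∈ V0, (s ∘ₗ G) x ∈ V1) ∧ (∀ x ∈ V1, (s ∘ₗ G) x ∈ V0) ∧
      (s ∘ₗ G) ∘ₗ (s ∘ₗ G) = 0 ∧
      (∀ x ∈ V0, ∀ y, B ((s ∘ₗ G) x) y = B x ((s ∘ₗ G) y)) ∧
      (∀ x ∈ V1, ∀ y, B ((s ∘ₗ G) x) y = - B x ((s ∘ₗ G) y)) ∧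
      d ∘ₗ t = t ∘ₗ d ∧
      (∀ x y, B (t x) y = B x (t y)) ∧
      t ∘ₗ t = t ∧
      (s ∘ₗ G) ∘ₗ t = 0 ∧ t ∘ₗ (s ∘ₗ G) = 0 := by
  have h : IsAlmostHodge d s t := ⟨h1, h4, h6, h7a, h7b, hinv⟩
  set G := greenOperator (d * s + s * d) t
  have hd_odd : d.IsOdd V0 V1 := ⟨hd01, hd10⟩
  have hs_odd : s.IsOdd V0 V1 := ⟨hs01, hs10⟩
  have hG_even : G.IsEven V0 V1 :=
    (((hd_odd.mul hs_odd).add (hs_odd.mul hd_odd)).add ⟨ht0, ht1⟩ |>.ringInverse hgr).sub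
      ⟨ht0, ht1⟩
  have hdB : IsGradedSelfAdjoint B V0 V1 (-1) d :=
    ⟨fun x hx y ↦ by linear_combination hBd0 x hx y,
      fun x hx y ↦ by linear_combination hBd1 x hx y⟩
  have hsB : IsGradedSelfAdjoint B V0 V1 1 s := ⟨by simpa using h2a, by simpa using h2b⟩
  have hA : IsAdjointPair B B ⇑(d * s + s * d + t) ⇑(d * s + s * d + t) :=
    (IsGradedSelfAdjoint.isAdjointPair_laplacian hgr.codisjoint hdB hsB hd_odd hs_odd).add h5
  have hsGB :=
    hsB.mul ((hA.ringInverse hinv hinv).sub h5) hG_even h.commute_homotopy_greenOperator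
  refine ⟨h.laplacian_mul_eq_zero, h.mul_laplacian_eq_zero,
    fun x _ ↦ LinearMap.congr_fun h.mul_laplacian_eq_zero x, G,
    fun x _ ↦ LinearMap.congr_fun h.mul_greenOperator_eq_zero x,
    fun _ ↦ Module.End.apply_apply_of_mul_eq_one_sub h.laplacian_mul_greenOperator,
    fun _ ↦ Module.End.apply_apply_of_mul_eq_one_sub h.greenOperator_mul_laplacian,
    fun _ ⟨y, hy⟩ ↦ hy ▸ LinearMap.congr_fun h.greenOperator_mul_eq_zero y,
    (h.commute_differential_greenOperator hd2).eq.symm, h.greenOperator_mul_eq_zero,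
    h.mul_greenOperator_eq_zero, h.commute_homotopy_greenOperator.eq.symm,
    h.homotopy_mul_greenOperator hd2, (hs_odd.mul_isEven hG_even).1,
    (hs_odd.mul_isEven hG_even).2, h.mul_greenOperator_mul_self,
    by simpa using hsGB.1, by simpa using hsGB.2, h4, h5, h6,
    show s * G * t = 0 by rw [mul_assoc, h.greenOperator_mul_eq_zero, mul_zero],
    show t * (s * G) = 0 by rw [← mul_assoc, h.idem_mul_eq_zero, zero_mul]⟩

/-- An almost Hodge decomposition `(t, s)` (conditions (1),(2),(4),(5),
(6),(7), with `d∘s + s∘d + t` invertible) may be corrected to a genuine Hodge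
decomposition: `A := d∘s + s∘d` satisfies `A∘t = t∘A = 0`, so it restricts to an
automorphism of `ker t`; the Green operator `G` (inverse of `A` on `ker t`, zero on
`im t`) commutes with `d`, satisfies `G∘t = t∘G = 0`, `G∘s = s∘G`,
`(s∘G)∘d + d∘(s∘G) = 1 − t`, and `(t, s∘G)` is a genuine Hodge decomposition. -/
theorem almost_hodge_decomposition_correction
    {k V : Type*} [Field k] [CharZero k] [AddCommGroup V] [Module k V]
    -- ℤ/2-grading: V = V₀ ⊕ V₁
    (V0 V1 : Submodule k V) (hgr : IsCompl V0 V1)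
    -- the differential: odd, square zero
    (d : V →ₗ[k] V) (hd2 : d ∘ₗ d = 0)
    (hd01 : ∀ x ∈ V0, d x ∈ V1) (hd10 : ∀ x ∈ V1, d x ∈ V0)
    -- bilinear form compatible with d
    (B : V →ₗ[k] V →ₗ[k] k)
    (hBd0 : ∀ x ∈ V0, ∀ y, B (d x) y + B x (d y) = 0)
    (hBd1 : ∀ x ∈ V1, ∀ y, B (d x) y - B x (d y) = 0)
    -- almost Hodge decomposition (t, s): t even, s odd,
    -- conditions (1), (2), (4), (5), (6), (7), and d∘s + s∘d + t invertible
    (t s : V →ₗ[k] V)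
    (ht0 : ∀ x ∈ V0, t x ∈ V0) (ht1 : ∀ x ∈ V1, t x ∈ V1)
    (hs01 : ∀ x ∈ V0, s x ∈ V1) (hs10 : ∀ x ∈ V1, s x ∈ V0)
    (h1 : s ∘ₗ s = 0)
    (h2a : ∀ x ∈ V0, ∀ y, B (s x) y = B x (s y))
    (h2b : ∀ x ∈ V1, ∀ y, B (s x) y = - B x (s y))
    (h4 : d ∘ₗ t = t ∘ₗ d)
    (h5 : ∀ x y, B (t x) y = B x (t y))
    (h6 : t ∘ₗ t = t)
    (h7a : s ∘ₗ t = 0) (h7b : t ∘ₗ s = 0)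
    (hinv : IsUnit (d ∘ₗ s + s ∘ₗ d + t : Module.End k V)) :
    -- A := d∘s + s∘d annihilates and is annihilated by t, hence restricts to ker t
    (d ∘ₗ s + s ∘ₗ d) ∘ₗ t = 0 ∧ t ∘ₗ (d ∘ₗ s + s ∘ₗ d) = 0 ∧
    (∀ x ∈ LinearMap.ker t, (d ∘ₗ s + s ∘ₗ d) x ∈ LinearMap.ker t) ∧
    -- the Green operator G exists
    ∃ G : V →ₗ[k] V,
      -- G is inverse to A on ker t (so A restricts to an automorphism of ker t)
      (∀ x ∈ LinearMap.ker t, G x ∈ LinearMap.ker t) ∧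
      (∀ x ∈ LinearMap.ker t, (d ∘ₗ s + s ∘ₗ d) (G x) = x) ∧
      (∀ x ∈ LinearMap.ker t, G ((d ∘ₗ s + s ∘ₗ d) x) = x) ∧
      -- G is zero on im t
      (∀ x ∈ LinearMap.range t, G x = 0) ∧
      -- G commutes with d, kills t, commutes with s
      G ∘ₗ d = d ∘ₗ G ∧ G ∘ₗ t = 0 ∧ t ∘ₗ G = 0 ∧ G ∘ₗ s = s ∘ₗ G ∧
      -- the corrected homotopy identity
      (s ∘ₗ G) ∘ₗ d + d ∘ₗ (s ∘ₗ G) = LinearMap.id - t ∧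
      -- (t, s∘G) is a genuine Hodge decomposition: s∘G is odd and
      -- conditions (1)-(7) hold with s replaced by s∘G
      (∀ x ∈ V0, (s ∘ₗ G) x ∈ V1) ∧ (∀ x ∈ V1, (s ∘ₗ G) x ∈ V0) ∧
      (s ∘ₗ G) ∘ₗ (s ∘ₗ G) = 0 ∧
      (∀ x ∈ V0, ∀ y, B ((s ∘ₗ G) x) y = B x ((s ∘ₗ G) y)) ∧
      (∀ x ∈ V1, ∀ y, B ((s ∘ₗ G) x) y = - B x ((s ∘ₗ G) y)) ∧
      d ∘ₗ t = t ∘ₗ d ∧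
      (∀ x y, B (t x) y = B x (t y)) ∧
      t ∘ₗ t = t ∧
      (s ∘ₗ G) ∘ₗ t = 0 ∧ t ∘ₗ (s ∘ₗ G) = 0 :=
  almost_hodge_decomposition_correction_general V0 V1 hgr d hd2 hd01 hd10 B hBd0 hBd1 t s ht0 ht1
    hs01 hs10 h1 h2a h2b h4 h5 h6 h7a h7b hinv
end

section
/- Let (V, d) be a ℤ/2-graded dg vector space over a field k of characteristic zero, let B be a bilinear form on V compatible with d, and let (t, s) be a harmonious Hodge decomposition of (V, d, B). Then V is the internal direct sum im d ⊕ im s ⊕ im t; the subspace im t is orthogonal to im d ⊕ im s with respect to B; the subspace im s is isotropic (B(s x, s y) = 0 for all x, y); and ker d = im d ⊕ im t, so that im t carries the homology of (V, d). -/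
/-! The homotopy identity `s d + d s = 1 - t` writes every `x` as `d (s x) + s (d x) + t x`,
so the three images span. Since `t` kills `d` (it commutes with `d` and `d t = 0`) and `s`,
`im d ⊕ im s` lies in `ker t`, which meets the image of the idempotent `t` trivially and is
`B`-orthogonal to it because `t` is self-adjoint. On `im d ∩ ker s` the identity collapses to
`v = d (s v) = 0`. Graded symmetry of `s` moves one `s` across `B`, and `s² = 0` makes `im s`
isotropic. Finally, on `ker d` the identity reads `x = d (s x) + t x`. -/

open LinearMap

namespace HodgeDecomposition

section Homotopy

variable {R M : Type*} [Ring R] [AddCommGroup M] [Module R M] {d s t : M →ₗ[R] M}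

theorem eq_add_add_of_homotopy (h : s ∘ₗ d + d ∘ₗ s = LinearMap.id - t) (x : M) :
    x = d (s x) + s (d x) + t x := by
  have hx := congr($h x)
  simp only [LinearMap.add_apply, comp_apply, LinearMap.sub_apply, id_apply] at hx
  rw [add_comm (d (s x)), hx, sub_add_cancel]

theorem range_sup_range_sup_range_eq_top (h : s ∘ₗ d + d ∘ₗ s = LinearMap.id - t) :
    range d ⊔ range s ⊔ range t = ⊤ := by
  refine eq_top_iff.mpr fun x _ => ?_
  rw [eq_add_add_of_homotopy h x]
  exact add_mem (add_mem (Submodule.mem_sup_left (Submodule.mem_sup_left (mem_range_self d _)))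
    (Submodule.mem_sup_left (Submodule.mem_sup_right (mem_range_self s _))))
    (Submodule.mem_sup_right (mem_range_self t _))

theorem disjoint_range_ker (h : s ∘ₗ d + d ∘ₗ s = LinearMap.id - t) (hd : d ∘ₗ d = 0)
    (htd : t ∘ₗ d = 0) : Disjoint (range d) (ker s) := by
  rw [Submodule.disjoint_def]
  rintro _ ⟨a, rfl⟩ (hs : s (d a) = 0)
  have hdd : d (d a) = 0 := congr($hd a)
  have htda : t (d a) = 0 := congr($htd a)
  simpa [hs, hdd, htda] using eq_add_add_of_homotopy h (d a)

theorem ker_eq_range_sup_range (h : s ∘ₗ d + d ∘ₗ s = LinearMap.id - t) (hd : d ∘ₗ d = 0)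
    (hdt : d ∘ₗ t = 0) : ker d = range d ⊔ range t := by
  refine le_antisymm (fun x (hx : d x = 0) => ?_)
    (sup_le (range_le_ker_iff.mpr hd) (range_le_ker_iff.mpr hdt))
  rw [eq_add_add_of_homotopy h x, hx, map_zero, add_zero]
  exact add_mem (Submodule.mem_sup_left (mem_range_self d _))
    (Submodule.mem_sup_right (mem_range_self t _))

end Homotopy

section Form

variable {R M : Type*} [CommRing R] [AddCommGroup M] [Module R M]

theorem apply_eq_zero_of_mem_range_of_mem_ker {B : M →ₗ[R] M →ₗ[R] R} {t : M →ₗ[R] M}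
    (ht : ∀ x y, B (t x) y = B x (t y)) {x y : M} (hx : x ∈ range t) (hy : y ∈ ker t) :
    B x y = 0 ∧ B y x = 0 := by
  obtain ⟨u, rfl⟩ := hx
  rw [mem_ker] at hy
  rw [ht, hy, ← ht, hy]
  simp

theorem apply_apply_eq_zero_of_gradedSymm {B : M →ₗ[R] M →ₗ[R] R} {s : M →ₗ[R] M}
    {V0 V1 : Submodule R M} (hgr : IsCompl V0 V1) (hss : s ∘ₗ s = 0)
    (hs0 : ∀ x ∈ V0, ∀ y, B (s x) y = B x (s y))
    (hs1 : ∀ x ∈ V1, ∀ y, B (s x) y = - B x (s y)) (x y : M) :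
    B (s x) (s y) = 0 := by
  have hssy : s (s y) = 0 := congr($hss y)
  suffices V0 ⊔ V1 ≤ ker ((B.flip (s y)) ∘ₗ s) by
    simpa using this (hgr.sup_eq_top ▸ Submodule.mem_top : x ∈ V0 ⊔ V1)
  refine sup_le (fun x hx => ?_) (fun x hx => ?_)
  · simp [hs0 x hx, hssy]
  · simp [hs1 x hx, hssy]

end Form

end HodgeDecomposition

open HodgeDecomposition in
theorem harmonious_hodge_three_term_decomposition_general
    {k V : Type*} [Field k] [AddCommGroup V] [Module k V]
    -- ℤ/2-grading: V = V₀ ⊕ V₁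
    (V0 V1 : Submodule k V) (hgr : IsCompl V0 V1)
    -- the differential: odd, square zero
    (d : V →ₗ[k] V) (hd2 : d ∘ₗ d = 0)
    -- bilinear form compatible with d
    (B : V →ₗ[k] V →ₗ[k] k)
    -- harmonious Hodge decomposition (t, s): t even, s odd
    (t s : V →ₗ[k] V)
    (h1 : s ∘ₗ s = 0)
    (h2a : ∀ x ∈ V0, ∀ y, B (s x) y = B x (s y))
    (h2b : ∀ x ∈ V1, ∀ y, B (s x) y = - B x (s y))
    (h3 : s ∘ₗ d + d ∘ₗ s = LinearMap.id - t)
    (h4 : d ∘ₗ t = t ∘ₗ d)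
    (h5 : ∀ x y, B (t x) y = B x (t y))
    (h6 : t ∘ₗ t = t)
    (h7b : t ∘ₗ s = 0)
    (hharm : d ∘ₗ t = 0) :
    -- V = im d ⊕ im s ⊕ im t (internal direct sum)
    LinearMap.range d ⊔ LinearMap.range s ⊔ LinearMap.range t = ⊤ ∧
    Disjoint (LinearMap.range d) (LinearMap.range s) ∧
    Disjoint (LinearMap.range d ⊔ LinearMap.range s) (LinearMap.range t) ∧
    -- im t is orthogonal to im d ⊕ im s
    (∀ x ∈ LinearMap.range t, ∀ y ∈ LinearMap.range d ⊔ LinearMap.range s,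
      B x y = 0 ∧ B y x = 0) ∧
    -- im s is isotropic
    (∀ x y : V, B (s x) (s y) = 0) ∧
    -- ker d = im d ⊕ im t, so im t carries the homology of (V, d)
    LinearMap.ker d = LinearMap.range d ⊔ LinearMap.range t := by
  have htd : t ∘ₗ d = 0 := h4 ▸ hharm
  have hdst : LinearMap.range d ⊔ LinearMap.range s ≤ LinearMap.ker t :=
    sup_le (range_le_ker_iff.mpr htd) (range_le_ker_iff.mpr h7b)
  refine ⟨range_sup_range_sup_range_eq_top h3,
    (disjoint_range_ker h3 hd2 htd).mono_right (range_le_ker_iff.mpr h1),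
    (IsIdempotentElem.isCompl h6).disjoint.symm.mono_left hdst,
    fun x hx y hy => apply_eq_zero_of_mem_range_of_mem_ker h5 hx (hdst hy),
    apply_apply_eq_zero_of_gradedSymm hgr h1 h2a h2b,
    ker_eq_range_sup_range h3 hd2 hharm⟩

/-- A harmonious Hodge decomposition `(t, s)` of `(V, d, B)` yields the
three-term internal direct sum `V = im d ⊕ im s ⊕ im t` with `im t` orthogonal to
`im d ⊕ im s`, `im s` isotropic, and `ker d = im d ⊕ im t`. -/
theorem harmonious_hodge_three_term_decomposition
    {k V : Type*} [Field k] [CharZero k] [AddCommGroup V] [Module k V]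
    -- ℤ/2-grading: V = V₀ ⊕ V₁
    (V0 V1 : Submodule k V) (hgr : IsCompl V0 V1)
    -- the differential: odd, square zero
    (d : V →ₗ[k] V) (hd2 : d ∘ₗ d = 0)
    (hd01 : ∀ x ∈ V0, d x ∈ V1) (hd10 : ∀ x ∈ V1, d x ∈ V0)
    -- bilinear form compatible with d
    (B : V →ₗ[k] V →ₗ[k] k)
    (hBd0 : ∀ x ∈ V0, ∀ y, B (d x) y + B x (d y) = 0)
    (hBd1 : ∀ x ∈ V1, ∀ y, B (d x) y - B x (d y) = 0)
    -- harmonious Hodge decomposition (t, s): t even, s odd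
    (t s : V →ₗ[k] V)
    (ht0 : ∀ x ∈ V0, t x ∈ V0) (ht1 : ∀ x ∈ V1, t x ∈ V1)
    (hs01 : ∀ x ∈ V0, s x ∈ V1) (hs10 : ∀ x ∈ V1, s x ∈ V0)
    (h1 : s ∘ₗ s = 0)
    (h2a : ∀ x ∈ V0, ∀ y, B (s x) y = B x (s y))
    (h2b : ∀ x ∈ V1, ∀ y, B (s x) y = - B x (s y))
    (h3 : s ∘ₗ d + d ∘ₗ s = LinearMap.id - t)
    (h4 : d ∘ₗ t = t ∘ₗ d)
    (h5 : ∀ x y, B (t x) y = B x (t y))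
    (h6 : t ∘ₗ t = t)
    (h7a : s ∘ₗ t = 0) (h7b : t ∘ₗ s = 0)
    (hharm : d ∘ₗ t = 0) :
    -- V = im d ⊕ im s ⊕ im t (internal direct sum)
    LinearMap.range d ⊔ LinearMap.range s ⊔ LinearMap.range t = ⊤ ∧
    Disjoint (LinearMap.range d) (LinearMap.range s) ∧
    Disjoint (LinearMap.range d ⊔ LinearMap.range s) (LinearMap.range t) ∧
    -- im t is orthogonal to im d ⊕ im s
    (∀ x ∈ LinearMap.range t, ∀ y ∈ LinearMap.range d ⊔ LinearMap.range s,
      B x y = 0 ∧ B y x = 0) ∧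
    -- im s is isotropic
    (∀ x y : V, B (s x) (s y) = 0) ∧
    -- ker d = im d ⊕ im t, so im t carries the homology of (V, d)
    LinearMap.ker d = LinearMap.range d ⊔ LinearMap.range t :=
  harmonious_hodge_three_term_decomposition_general V0 V1 hgr d hd2 B t s h1 h2a h2b h3 h4 h5 h6 h7b
    hharm
end

section
/- Let (V, d) be a ℤ/2-graded dg vector space over a field k of characteristic zero, and let B be a bilinear form on V compatible with d. Suppose U and W are graded subspaces of V (U = (U∩V₀) ⊕ (U∩V₁) and likewise for W) such that V is the internal direct sum im d ⊕ U ⊕ W, W is orthogonal to im d ⊕ U with respect to B, U is isotropic (B(u, u') = 0 for all u, u' ∈ U), W ⊆ ker d, and ker d = im d ⊕ W. Then there exists a harmonious Hodge decomposition (t, s) of (V, d, B) with im t = W and im s = U. -/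
/-!
Put `R = im d`. Since `ker d = R ⊕ W`, the summand `U` is a complement of `ker d`, so `d`
restricts to an isomorphism `U ≃ R`. Take `t` to be the projection onto `W` along `R ⊕ U` and
`s` to be the inverse of this isomorphism precomposed with the projection onto `R` along `U ⊕ W`.
On the three summands, `d`, `s` and `t` act by `(R, U, W) ↦ (0, R, 0)`, `(U, 0, 0)` and
`(0, 0, W)`, which gives the algebraic identities. `B`-self-adjointness of `t` and graded
self-adjointness of `s` come from the orthogonality relations, which let one replace an argument
of `B` by its projection, together with the compatibility of `B` with `d`. The summands are
graded and `d` is odd, so the projections are even and `s` is odd.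
-/

open LinearMap Submodule

namespace Submodule

variable {k V : Type*} [Field k] [AddCommGroup V] [Module k V] {p q V0 V1 : Submodule k V}

def IsGraded (p V0 V1 : Submodule k V) : Prop :=
  p = p ⊓ V0 ⊔ p ⊓ V1

theorem IsGraded.symm (hp : p.IsGraded V0 V1) : p.IsGraded V1 V0 :=
  hp.trans (sup_comm _ _)

theorem IsGraded.sup (hp : p.IsGraded V0 V1) (hq : q.IsGraded V0 V1) :
    (p ⊔ q).IsGraded V0 V1 := by
  refine le_antisymm (sup_le (hp.le.trans ?_) (hq.le.trans ?_)) (sup_le inf_le_left inf_le_left)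
  · exact sup_le_sup (inf_le_inf_right _ le_sup_left) (inf_le_inf_right _ le_sup_left)
  · exact sup_le_sup (inf_le_inf_right _ le_sup_right) (inf_le_inf_right _ le_sup_right)

theorem IsGraded.exists_add (hp : p.IsGraded V0 V1) {x : V} (hx : x ∈ p) :
    ∃ x₀ ∈ p ⊓ V0, ∃ x₁ ∈ p ⊓ V1, x₀ + x₁ = x :=
  mem_sup.1 (hp ▸ hx)

theorem isGraded_range_of_odd (hV : Codisjoint V0 V1) {f : V →ₗ[k] V}
    (hf₀ : ∀ x ∈ V0, f x ∈ V1) (hf₁ : ∀ x ∈ V1, f x ∈ V0) :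
    (range f).IsGraded V0 V1 := by
  refine le_antisymm ?_ (sup_le inf_le_left inf_le_left)
  rintro _ ⟨x, rfl⟩
  obtain ⟨x₀, hx₀, x₁, hx₁, rfl⟩ := mem_sup.1 (hV.eq_top ▸ mem_top : x ∈ V0 ⊔ V1)
  rw [map_add, add_comm]
  exact add_mem (mem_sup_left ⟨mem_range_self f x₁, hf₁ x₁ hx₁⟩)
    (mem_sup_right ⟨mem_range_self f x₀, hf₀ x₀ hx₀⟩)

theorem IsGraded.mem_invtSubmodule_projection (hV : IsCompl V0 V1) (hp : p.IsGraded V0 V1) :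
    p ∈ Module.End.invtSubmodule (V0.projection V1 hV) := by
  rw [Module.End.mem_invtSubmodule]
  intro x hx
  obtain ⟨x₀, hx₀, x₁, hx₁, rfl⟩ := hp.exists_add hx
  show V0.projection V1 hV (x₀ + x₁) ∈ p
  rw [map_add, projection_apply_of_mem_left hV hx₀.2, projection_apply_of_mem_right hV hx₁.2,
    add_zero]
  exact hx₀.1

theorem projection_mem_of_isGraded (hV : IsCompl V0 V1) (hp : p.IsGraded V0 V1)
    (hq : q.IsGraded V0 V1) (h : IsCompl p q) {x : V} (hx : x ∈ V0) :
    p.projection q h x ∈ V0 := by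
  have hcomm : Commute (p.projection q h) (V0.projection V1 hV) :=
    (isIdempotentElem_projection h).commute_iff.2
      ⟨by simpa using hp.mem_invtSubmodule_projection hV,
        by simpa using hq.mem_invtSubmodule_projection hV⟩
  rw [← projection_eq_self_iff hV] at hx ⊢
  rw [← Module.End.mul_apply, ← hcomm.eq, Module.End.mul_apply, hx]

theorem IsGraded.mem_of_odd_apply_mem (hV : Disjoint V0 V1) (hp : p.IsGraded V0 V1)
    {f : V →ₗ[k] V} (hf₀ : ∀ x ∈ V0, f x ∈ V1) (hf₁ : ∀ x ∈ V1, f x ∈ V0)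
    (hinj : Disjoint p (ker f)) {x : V} (hx : x ∈ p) (hfx : f x ∈ V0) : x ∈ V1 := by
  obtain ⟨x₀, hx₀, x₁, hx₁, rfl⟩ := hp.exists_add hx
  have hfx₀ : f x₀ = 0 := by
    refine disjoint_def.1 hV _ ?_ (hf₀ x₀ hx₀.2)
    rw [map_add] at hfx
    simpa using sub_mem hfx (hf₁ x₁ hx₁.2)
  rw [disjoint_def.1 hinj x₀ hx₀.1 hfx₀, zero_add]
  exact hx₁.2

theorem apply_projection_of_le_ker {M : Type*} [AddCommGroup M] [Module k M]
    (h : IsCompl p q) {f : V →ₗ[k] M} (hf : q ≤ ker f) (x : V) :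
    f (p.projection q h x) = f x := by
  conv_rhs => rw [← projection_add_projection_eq_self h x]
  rw [map_add, mem_ker.1 (hf (projection_apply_mem h.symm x)), add_zero]

theorem projection_comp_eq_zero_of_range_le {M : Type*} [AddCommGroup M] [Module k M]
    {f : M →ₗ[k] V} (h : IsCompl p q) (hf : range f ≤ q) :
    p.projection q h ∘ₗ f = 0 :=
  range_le_ker_iff.1 (by rwa [ker_projection])

theorem comp_projection_eq_zero_of_le_ker {M : Type*} [AddCommGroup M] [Module k M]
    {f : V →ₗ[k] M} (h : IsCompl p q) (hf : p ≤ ker f) : f ∘ₗ p.projection q h = 0 :=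
  range_le_ker_iff.1 (by rwa [range_projection])

theorem isSelfAdjoint_projection (B : V →ₗ[k] V →ₗ[k] k) (h : IsCompl p q)
    (hB : ∀ x ∈ p, q ≤ ker (B x)) (hB' : ∀ x ∈ p, q ≤ ker (B.flip x)) :
    B.IsSelfAdjoint (p.projection q h) := by
  intro x y
  calc B (p.projection q h x) y
      = B (p.projection q h x) (p.projection q h y) :=
        (apply_projection_of_le_ker h (hB _ (projection_apply_mem h x)) y).symm
    _ = B x (p.projection q h y) :=
        apply_projection_of_le_ker h (hB' _ (projection_apply_mem h y)) x

end Submodule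

section HodgeHomotopy

variable {k V : Type*} [Field k] [AddCommGroup V] [Module k V] {d : V →ₗ[k] V}
  {U Q : Submodule k V}

noncomputable def hodgeHomotopy (hU : IsCompl U (ker d)) (hR : IsCompl (range d) Q) :
    V →ₗ[k] V :=
  U.subtype ∘ₗ (d.kerComplementEquivRange hU).symm.toLinearMap ∘ₗ
    (range d).projectionOnto Q hR

variable (hU : IsCompl U (ker d)) (hR : IsCompl (range d) Q)

theorem hodgeHomotopy_apply_mem (x : V) : hodgeHomotopy hU hR x ∈ U :=
  Subtype.prop _

theorem apply_hodgeHomotopy (x : V) :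
    d (hodgeHomotopy hU hR x) = (range d).projection Q hR x := by
  rw [hodgeHomotopy, comp_apply, comp_apply, subtype_apply, LinearEquiv.coe_coe,
    ← kerComplementEquivRange_apply_coe d hU, LinearEquiv.apply_symm_apply]
  rfl

theorem le_ker_hodgeHomotopy : Q ≤ ker (hodgeHomotopy hU hR) := fun x hx => by
  rw [mem_ker, hodgeHomotopy, comp_apply, comp_apply, projectionOnto_apply_of_mem_right hR hx,
    map_zero, map_zero]

theorem hodgeHomotopy_apply_apply {u : V} (hu : u ∈ U) : hodgeHomotopy hU hR (d u) = u := by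
  have : (d.kerComplementEquivRange hU).symm ⟨d u, mem_range_self d u⟩ = ⟨u, hu⟩ :=
    (LinearEquiv.symm_apply_eq _).2 (Subtype.ext (by simp))
  rw [hodgeHomotopy, comp_apply, comp_apply,
    projectionOnto_apply_of_mem_left hR (mem_range_self d u), LinearEquiv.coe_coe, this,
    subtype_apply]

theorem range_hodgeHomotopy : range (hodgeHomotopy hU hR) = U :=
  le_antisymm (range_le_iff_comap.2 (eq_top_iff.2 fun x _ => hodgeHomotopy_apply_mem hU hR x))
    fun u hu => ⟨d u, hodgeHomotopy_apply_apply hU hR hu⟩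

theorem hodgeHomotopy_comp_self (hUQ : U ≤ Q) :
    hodgeHomotopy hU hR ∘ₗ hodgeHomotopy hU hR = 0 :=
  range_le_ker_iff.1 <|
    (range_hodgeHomotopy hU hR).trans_le (hUQ.trans (le_ker_hodgeHomotopy hU hR))

theorem hodgeHomotopy_comp_add_comp {W : Submodule k V} (hd : d ∘ₗ d = 0)
    (hW : IsCompl (range d ⊔ U) W) (hWd : W ≤ ker d) (hUQ : U ≤ Q) (hWQ : W ≤ Q) :
    hodgeHomotopy hU hR ∘ₗ d + d ∘ₗ hodgeHomotopy hU hR =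
      LinearMap.id - W.projection (range d ⊔ U) hW.symm := by
  have hs := le_ker_hodgeHomotopy hU hR
  refine ext_on_codisjoint hW.codisjoint (eqOn_sup ?_ ?_) ?_
  · rintro _ ⟨x, rfl⟩
    simp [mem_ker.1 (range_le_ker_iff.2 hd (mem_range_self d x)), apply_hodgeHomotopy,
      projection_apply_of_mem_left hR (mem_range_self d x),
      projection_apply_of_mem_right hW.symm (mem_sup_left (mem_range_self d x))]
  · intro u hu
    simp [hodgeHomotopy_apply_apply hU hR hu, mem_ker.1 (hs (hUQ hu)),
      projection_apply_of_mem_right hW.symm (mem_sup_right hu)]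
  · intro w hw
    simp [mem_ker.1 (hWd hw), mem_ker.1 (hs (hWQ hw)), projection_apply_of_mem_left hW.symm hw]

theorem hodgeHomotopy_apply_mem_of_odd {V0 V1 : Submodule k V} (hV : IsCompl V0 V1)
    (hd₀ : ∀ x ∈ V0, d x ∈ V1) (hd₁ : ∀ x ∈ V1, d x ∈ V0) (hUgr : U.IsGraded V0 V1)
    (hQgr : Q.IsGraded V0 V1) {x : V} (hx : x ∈ V0) : hodgeHomotopy hU hR x ∈ V1 :=
  hUgr.mem_of_odd_apply_mem hV.disjoint hd₀ hd₁ hU.disjoint (hodgeHomotopy_apply_mem hU hR x)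
    (apply_hodgeHomotopy hU hR x ▸
      projection_mem_of_isGraded hV (isGraded_range_of_odd hV.codisjoint hd₀ hd₁) hQgr hR hx)

theorem apply_hodgeHomotopy_left (B : V →ₗ[k] V →ₗ[k] k) (hB : ∀ u ∈ U, Q ≤ ker (B u))
    (x y : V) :
    B (hodgeHomotopy hU hR x) y = B (hodgeHomotopy hU hR x) (d (hodgeHomotopy hU hR y)) := by
  rw [apply_hodgeHomotopy, apply_projection_of_le_ker hR (hB _ (hodgeHomotopy_apply_mem hU hR x))]

theorem apply_hodgeHomotopy_right (B : V →ₗ[k] V →ₗ[k] k)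
    (hB : ∀ u ∈ U, Q ≤ ker (B.flip u)) (x y : V) :
    B x (hodgeHomotopy hU hR y) = B (d (hodgeHomotopy hU hR x)) (hodgeHomotopy hU hR y) :=
  apply_hodgeHomotopy_left hU hR B.flip hB y x

end HodgeHomotopy

theorem three_term_decomposition_gives_harmonious_hodge_general
    {k V : Type*} [Field k] [AddCommGroup V] [Module k V]
    -- ℤ/2-grading: V = V₀ ⊕ V₁
    (V0 V1 : Submodule k V) (hgr : IsCompl V0 V1)
    -- the differential: odd, square zero
    (d : V →ₗ[k] V) (hd2 : d ∘ₗ d = 0)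
    (hd01 : ∀ x ∈ V0, d x ∈ V1) (hd10 : ∀ x ∈ V1, d x ∈ V0)
    -- bilinear form compatible with d
    (B : V →ₗ[k] V →ₗ[k] k)
    (hBd0 : ∀ x ∈ V0, ∀ y, B (d x) y + B x (d y) = 0)
    (hBd1 : ∀ x ∈ V1, ∀ y, B (d x) y - B x (d y) = 0)
    -- graded subspaces U, W
    (U W : Submodule k V)
    (hUgr : U = (U ⊓ V0) ⊔ (U ⊓ V1))
    (hWgr : W = (W ⊓ V0) ⊔ (W ⊓ V1))
    -- V = im d ⊕ U ⊕ W (internal direct sum)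
    (hsum : LinearMap.range d ⊔ U ⊔ W = ⊤)
    (hdisj1 : Disjoint (LinearMap.range d) U)
    (hdisj2 : Disjoint (LinearMap.range d ⊔ U) W)
    -- W is orthogonal to im d ⊕ U
    (horth : ∀ w ∈ W, ∀ y ∈ LinearMap.range d ⊔ U, B w y = 0 ∧ B y w = 0)
    -- U is isotropic
    (hiso : ∀ u ∈ U, ∀ u' ∈ U, B u u' = 0)
    -- W carries the homology
    (hker : LinearMap.ker d = LinearMap.range d ⊔ W) :
    ∃ t s : V →ₗ[k] V,
      -- t is even, s is odd
      (∀ x ∈ V0, t x ∈ V0) ∧ (∀ x ∈ V1, t x ∈ V1) ∧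
      (∀ x ∈ V0, s x ∈ V1) ∧ (∀ x ∈ V1, s x ∈ V0) ∧
      -- conditions (1)-(7)
      s ∘ₗ s = 0 ∧
      (∀ x ∈ V0, ∀ y, B (s x) y = B x (s y)) ∧
      (∀ x ∈ V1, ∀ y, B (s x) y = - B x (s y)) ∧
      s ∘ₗ d + d ∘ₗ s = LinearMap.id - t ∧
      d ∘ₗ t = t ∘ₗ d ∧
      (∀ x y, B (t x) y = B x (t y)) ∧
      t ∘ₗ t = t ∧
      s ∘ₗ t = 0 ∧ t ∘ₗ s = 0 ∧
      -- harmonious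
      d ∘ₗ t = 0 ∧
      -- with im t = W and im s = U
      LinearMap.range t = W ∧ LinearMap.range s = U := by
  set R := range d
  have hW : IsCompl (R ⊔ U) W := ⟨hdisj2, codisjoint_iff.2 hsum⟩
  have hR : IsCompl R (U ⊔ W) := hdisj1.isCompl_sup_right_of_isCompl_sup_left hW
  have hU : IsCompl U (ker d) :=
    hker ▸ hdisj1.symm.isCompl_sup_right_of_isCompl_sup_left (sup_comm R U ▸ hW)
  have hWd : W ≤ ker d := hker ▸ le_sup_right
  have hRUgr : (R ⊔ U).IsGraded V0 V1 :=
    (isGraded_range_of_odd hgr.codisjoint hd01 hd10).sup hUgr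
  have hBU : ∀ u ∈ U, U ⊔ W ≤ ker (B u) := fun u hu =>
    sup_le (fun u' hu' => hiso u hu u' hu') fun w hw => (horth w hw u (mem_sup_right hu)).2
  have hBU' : ∀ u ∈ U, U ⊔ W ≤ ker (B.flip u) := fun u hu =>
    sup_le (fun u' hu' => hiso u' hu' u hu) fun w hw => (horth w hw u (mem_sup_right hu)).1
  set t := W.projection (R ⊔ U) hW.symm
  set s := hodgeHomotopy hU hR
  have hs₀ : ∀ x ∈ V0, s x ∈ V1 := fun x =>
    hodgeHomotopy_apply_mem_of_odd hU hR hgr hd01 hd10 hUgr (IsGraded.sup hUgr hWgr)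
  have hs₁ : ∀ x ∈ V1, s x ∈ V0 := fun x =>
    hodgeHomotopy_apply_mem_of_odd hU hR hgr.symm hd10 hd01 (IsGraded.symm hUgr)
      (IsGraded.sup hUgr hWgr).symm
  have htd : t ∘ₗ d = 0 := projection_comp_eq_zero_of_range_le _ le_sup_left
  have hdt : d ∘ₗ t = 0 := comp_projection_eq_zero_of_le_ker _ hWd
  refine ⟨t, s, fun x => projection_mem_of_isGraded hgr hWgr hRUgr _,
    fun x => projection_mem_of_isGraded hgr.symm (IsGraded.symm hWgr) hRUgr.symm _, hs₀, hs₁,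
    hodgeHomotopy_comp_self hU hR le_sup_left, fun x hx y => ?_, fun x hx y => ?_,
    hodgeHomotopy_comp_add_comp hU hR hd2 hW hWd le_sup_left le_sup_right, hdt.trans htd.symm,
    isSelfAdjoint_projection B _ (fun w hw y hy => (horth w hw y hy).1)
      (fun w hw y hy => (horth w hw y hy).2),
    (isIdempotentElem_projection _).eq,
    comp_projection_eq_zero_of_le_ker _ (le_sup_right.trans (le_ker_hodgeHomotopy hU hR)),
    projection_comp_eq_zero_of_range_le _ ((range_hodgeHomotopy hU hR).trans_le le_sup_right),
    hdt, range_projection _, range_hodgeHomotopy hU hR⟩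
  · rw [apply_hodgeHomotopy_left hU hR B hBU, apply_hodgeHomotopy_right hU hR B hBU']
    linear_combination -hBd1 _ (hs₀ x hx) (s y)
  · rw [apply_hodgeHomotopy_left hU hR B hBU, apply_hodgeHomotopy_right hU hR B hBU']
    linear_combination hBd0 _ (hs₁ x hx) (s y)

/-- Conversely, a decomposition `V = im d ⊕ U ⊕ W` into graded
subspaces with `W ⊥ (im d ⊕ U)`, `U` isotropic, `W ⊆ ker d` and
`ker d = im d ⊕ W` gives rise to a harmonious Hodge decomposition `(t, s)` of
`(V, d, B)` with `im t = W` and `im s = U`. -/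
theorem three_term_decomposition_gives_harmonious_hodge
    {k V : Type*} [Field k] [CharZero k] [AddCommGroup V] [Module k V]
    -- ℤ/2-grading: V = V₀ ⊕ V₁
    (V0 V1 : Submodule k V) (hgr : IsCompl V0 V1)
    -- the differential: odd, square zero
    (d : V →ₗ[k] V) (hd2 : d ∘ₗ d = 0)
    (hd01 : ∀ x ∈ V0, d x ∈ V1) (hd10 : ∀ x ∈ V1, d x ∈ V0)
    -- bilinear form compatible with d
    (B : V →ₗ[k] V →ₗ[k] k)
    (hBd0 : ∀ x ∈ V0, ∀ y, B (d x) y + B x (d y) = 0)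
    (hBd1 : ∀ x ∈ V1, ∀ y, B (d x) y - B x (d y) = 0)
    -- graded subspaces U, W
    (U W : Submodule k V)
    (hUgr : U = (U ⊓ V0) ⊔ (U ⊓ V1))
    (hWgr : W = (W ⊓ V0) ⊔ (W ⊓ V1))
    -- V = im d ⊕ U ⊕ W (internal direct sum)
    (hsum : LinearMap.range d ⊔ U ⊔ W = ⊤)
    (hdisj1 : Disjoint (LinearMap.range d) U)
    (hdisj2 : Disjoint (LinearMap.range d ⊔ U) W)
    -- W is orthogonal to im d ⊕ U
    (horth : ∀ w ∈ W, ∀ y ∈ LinearMap.range d ⊔ U, B w y = 0 ∧ B y w = 0)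
    -- U is isotropic
    (hiso : ∀ u ∈ U, ∀ u' ∈ U, B u u' = 0)
    -- W carries the homology
    (hWker : W ≤ LinearMap.ker d)
    (hker : LinearMap.ker d = LinearMap.range d ⊔ W) :
    ∃ t s : V →ₗ[k] V,
      -- t is even, s is odd
      (∀ x ∈ V0, t x ∈ V0) ∧ (∀ x ∈ V1, t x ∈ V1) ∧
      (∀ x ∈ V0, s x ∈ V1) ∧ (∀ x ∈ V1, s x ∈ V0) ∧
      -- conditions (1)-(7)
      s ∘ₗ s = 0 ∧
      (∀ x ∈ V0, ∀ y, B (s x) y = B x (s y)) ∧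
      (∀ x ∈ V1, ∀ y, B (s x) y = - B x (s y)) ∧
      s ∘ₗ d + d ∘ₗ s = LinearMap.id - t ∧
      d ∘ₗ t = t ∘ₗ d ∧
      (∀ x y, B (t x) y = B x (t y)) ∧
      t ∘ₗ t = t ∧
      s ∘ₗ t = 0 ∧ t ∘ₗ s = 0 ∧
      -- harmonious
      d ∘ₗ t = 0 ∧
      -- with im t = W and im s = U
      LinearMap.range t = W ∧ LinearMap.range s = U :=
  three_term_decomposition_gives_harmonious_hodge_general V0 V1 hgr d hd2 hd01 hd10 B hBd0 hBd1 U W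
    hUgr hWgr hsum hdisj1 hdisj2 horth hiso hker
end

section
/- Let (V, d) be a finite-dimensional ℤ/2-graded dg vector space over a field k of characteristic zero which is acyclic, i.e. ker d = im d. Let B be a bilinear form on V compatible with d. Then there exists a bilinear form C on V such that B(x, y) = C(d x, y) + (−1)^{|x|} C(x, d y) for all homogeneous x ∈ V and all y ∈ V. -/
/-!
An acyclic complex over a field has a contracting homotopy: if `s` is a generalized inverse of `d`
(`d s d = d`), then `e = d s + s d - 1` kills `d` on both sides, so exactness gives `e² = 0` and
`h = s (1 - e)` satisfies `d h + h d = (1 + e)(1 - e) = 1`. Since `d` is odd and `1` is even, the odd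
part of `h` (its off-diagonal part for `V = V₀ ⊕ V₁`) is still a contracting homotopy. For an odd
contracting homotopy `h`, compatibility of `B` turns `B x y = B (d h x) y + B (h d x) y` into
`C (d x) y ± C x (d y)` with `C = B ∘ h`.
-/

open LinearMap

theorem LinearMap.exists_comp_comp_eq_self {K V W : Type*} [DivisionRing K] [AddCommGroup V]
    [Module K V] [AddCommGroup W] [Module K W] (f : V →ₗ[K] W) :
    ∃ g : W →ₗ[K] V, f ∘ₗ g ∘ₗ f = f := by
  obtain ⟨r, hr⟩ := f.rangeRestrict.exists_rightInverse_of_surjective f.range_rangeRestrict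
  obtain ⟨g, hg⟩ := LinearMap.exists_extend r
  refine ⟨g, LinearMap.ext fun x => ?_⟩
  have hgx : g (f x) = r (f.rangeRestrict x) := congr($hg (f.rangeRestrict x))
  simpa [hgx] using congr(($hr (f.rangeRestrict x) : W))

section Ring

variable {R : Type*} [Ring R]

theorem exists_mul_add_mul_eq_one_of_mul_mul_eq_self {d s : R} (hd : d * d = 0)
    (hs : d * s * d = d) (hexact : ∀ x, d * x = 0 → d * s * x = x) :
    ∃ h, d * h + h * d = 1 := by
  set e := d * s + s * d - 1 with he
  have hde : d * e = 0 := by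
    rw [he, mul_sub, mul_add, ← mul_assoc, ← mul_assoc, hd, hs]; simp
  have hed : e * d = 0 := by
    rw [he, sub_mul, add_mul, mul_assoc s, hd, hs]; simp
  have hee : e * e = 0 :=
    calc e * e = e * d * (s * e) := by rw [mul_assoc, ← mul_assoc d, hexact e hde]
      _ = 0 := by rw [hed, zero_mul]
  refine ⟨s * (1 - e), ?_⟩
  calc d * (s * (1 - e)) + s * (1 - e) * d
      = (1 + e) * (1 - e) + s * (d * e) - s * (e * d) := by rw [he]; noncomm_ring
    _ = 1 - e * e := by rw [hde, hed]; noncomm_ring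
    _ = 1 := by rw [hee, sub_zero]

def oddPart (p h : R) : R := p * h * (1 - p) + (1 - p) * h * p

variable {p : R}

theorem IsIdempotentElem.mul_oddPart (hp : IsIdempotentElem p) (h : R) :
    p * oddPart p h = oddPart p h * (1 - p) := by
  have hpq := hp.mul_one_sub_self
  have hq := hp.one_sub.eq
  calc p * oddPart p h = p * p * h * (1 - p) + p * (1 - p) * h * p := by
        simp only [oddPart]; noncomm_ring
    _ = p * h * ((1 - p) * (1 - p)) + (1 - p) * h * (p * (1 - p)) := by
        rw [hp.eq, hpq, hq]; noncomm_ring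
    _ = oddPart p h * (1 - p) := by simp only [oddPart]; noncomm_ring

theorem IsIdempotentElem.mul_oddPart_add_oddPart_mul (hp : IsIdempotentElem p) {d h : R}
    (hd : p * d = d * (1 - p)) (hh : d * h + h * d = 1) :
    d * oddPart p h + oddPart p h * d = 1 := by
  have hd' : d * p = (1 - p) * d := by
    rw [sub_mul, one_mul, hd, mul_sub, mul_one, sub_sub_cancel]
  have h₁ : d * p * h * (1 - p) = (1 - p) * d * h * (1 - p) := by rw [hd']
  have h₂ : d * (1 - p) * h * p = p * d * h * p := by rw [← hd]
  have h₃ : p * h * (1 - p) * d = p * h * d * p := by rw [mul_assoc _ (1 - p), ← hd', ← mul_assoc]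
  have h₄ : (1 - p) * h * p * d = (1 - p) * h * d * (1 - p) := by
    rw [mul_assoc _ p, hd, ← mul_assoc]
  calc d * oddPart p h + oddPart p h * d
      = d * p * h * (1 - p) + d * (1 - p) * h * p + (p * h * (1 - p) * d + (1 - p) * h * p * d)
        := by simp only [oddPart]; noncomm_ring
    _ = (1 - p) * d * h * (1 - p) + p * d * h * p + (p * h * d * p + (1 - p) * h * d * (1 - p))
        := by rw [h₁, h₂, h₃, h₄]
    _ = (1 - p) * (d * h + h * d) * (1 - p) + p * (d * h + h * d) * p := by noncomm_ring
    _ = 1 := by rw [hh, mul_one, mul_one, hp.eq, hp.one_sub.eq, sub_add_cancel]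

end Ring

theorem Module.End.exists_mul_add_mul_eq_one_of_ker_eq_range {K V : Type*} [DivisionRing K]
    [AddCommGroup V] [Module K V] {d : Module.End K V} (hd : ker d = range d) :
    ∃ h, d * h + h * d = 1 := by
  obtain ⟨s, hs⟩ := d.exists_comp_comp_eq_self
  refine exists_mul_add_mul_eq_one_of_mul_mul_eq_self ?_ hs fun x hx => LinearMap.ext fun v => ?_
  · ext v
    exact (hd.ge (mem_range_self d v) : d (d v) = 0)
  · obtain ⟨w, hw⟩ : x v ∈ range d := hd ▸ (congr($hx v) : d (x v) = 0)
    simpa [← hw] using congr($hs w)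

theorem Submodule.projection_mul_eq_mul_one_sub_iff {K V : Type*} [Ring K] [AddCommGroup V]
    [Module K V] {P Q : Submodule K V} (hPQ : IsCompl P Q) (f : Module.End K V) :
    P.projection Q hPQ * f = f * (1 - P.projection Q hPQ) ↔
      (∀ x ∈ P, f x ∈ Q) ∧ (∀ x ∈ Q, f x ∈ P) := by
  have hP {x} (hx : x ∈ P) := projection_apply_of_mem_left hPQ hx
  have hQ {x} (hx : x ∈ Q) := projection_apply_of_mem_right hPQ hx
  constructor
  · intro hf
    refine ⟨fun x hx => ?_, fun x hx => ?_⟩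
    · rw [← projection_apply_eq_zero_iff hPQ]
      simpa [hP hx] using congr($hf x)
    · rw [← (by simpa [hQ hx] using congr($hf x) : P.projection Q hPQ (f x) = f x)]
      exact projection_apply_mem hPQ _
  · rintro ⟨hPQf, hQPf⟩
    refine ext_on_codisjoint hPQ.codisjoint (fun x hx => ?_) (fun x hx => ?_)
    · simp [hP hx, hQ (hPQf x hx)]
    · simp [hQ hx, hP (hQPf x hx)]

theorem compatible_form_is_boundary_on_acyclic_general
    {k V : Type*} [Field k] [AddCommGroup V] [Module k V]
    -- ℤ/2-grading: V = V₀ ⊕ V₁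
    (V0 V1 : Submodule k V) (hgr : IsCompl V0 V1)
    -- the differential: odd, square zero
    (d : V →ₗ[k] V)
    (hd01 : ∀ x ∈ V0, d x ∈ V1) (hd10 : ∀ x ∈ V1, d x ∈ V0)
    -- (V, d) is acyclic
    (hacyclic : LinearMap.ker d = LinearMap.range d)
    -- bilinear form compatible with d
    (B : V →ₗ[k] V →ₗ[k] k)
    (hBd0 : ∀ x ∈ V0, ∀ y, B (d x) y + B x (d y) = 0)
    (hBd1 : ∀ x ∈ V1, ∀ y, B (d x) y - B x (d y) = 0) :
    ∃ C : V →ₗ[k] V →ₗ[k] k,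
      (∀ x ∈ V0, ∀ y, B x y = C (d x) y + C x (d y)) ∧
      (∀ x ∈ V1, ∀ y, B x y = C (d x) y - C x (d y)) := by
  obtain ⟨h, hh⟩ := Module.End.exists_mul_add_mul_eq_one_of_ker_eq_range hacyclic
  have hp := Submodule.isIdempotentElem_projection hgr
  have hd := (Submodule.projection_mul_eq_mul_one_sub_iff hgr d).2 ⟨hd01, hd10⟩
  set h' := oddPart (V0.projection V1 hgr) h
  have hh' : ∀ x, d (h' x) + h' (d x) = x := fun x =>
    congr($(hp.mul_oddPart_add_oddPart_mul hd hh) x)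
  obtain ⟨h'01, h'10⟩ := (Submodule.projection_mul_eq_mul_one_sub_iff hgr h').1 (hp.mul_oddPart h)
  have hB : ∀ x y, B x y = B (d (h' x)) y + B (h' (d x)) y := fun x y => by
    rw [← LinearMap.add_apply, ← map_add, hh']
  refine ⟨B ∘ₗ h', fun x hx y => ?_, fun x hx y => ?_⟩
  · have := hBd1 (h' x) (h'01 x hx) y
    rw [hB x y]
    simp only [LinearMap.comp_apply]
    linear_combination this
  · have := hBd0 (h' x) (h'10 x hx) y
    rw [hB x y]
    simp only [LinearMap.comp_apply]
    linear_combination this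

/-- On a finite-dimensional acyclic ℤ/2-graded dg vector space
`(V, d)` over a field of characteristic zero, every bilinear form `B` compatible
with `d` is a boundary: there is a bilinear form `C` with
`B(x,y) = C(dx,y) + (−1)^{|x|} C(x,dy)` for homogeneous `x` and all `y`. -/
theorem compatible_form_is_boundary_on_acyclic
    {k V : Type*} [Field k] [CharZero k] [AddCommGroup V] [Module k V]
    [FiniteDimensional k V]
    -- ℤ/2-grading: V = V₀ ⊕ V₁
    (V0 V1 : Submodule k V) (hgr : IsCompl V0 V1)
    -- the differential: odd, square zero
    (d : V →ₗ[k] V) (hd2 : d ∘ₗ d = 0)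
    (hd01 : ∀ x ∈ V0, d x ∈ V1) (hd10 : ∀ x ∈ V1, d x ∈ V0)
    -- (V, d) is acyclic
    (hacyclic : LinearMap.ker d = LinearMap.range d)
    -- bilinear form compatible with d
    (B : V →ₗ[k] V →ₗ[k] k)
    (hBd0 : ∀ x ∈ V0, ∀ y, B (d x) y + B x (d y) = 0)
    (hBd1 : ∀ x ∈ V1, ∀ y, B (d x) y - B x (d y) = 0) :
    ∃ C : V →ₗ[k] V →ₗ[k] k,
      (∀ x ∈ V0, ∀ y, B x y = C (d x) y + C x (d y)) ∧
      (∀ x ∈ V1, ∀ y, B x y = C (d x) y - C x (d y)) :=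
  compatible_form_is_boundary_on_acyclic_general V0 V1 hgr d hd01 hd10 hacyclic B hBd0 hBd1
end

section
/- Let (V, d) be a finite-dimensional ℤ/2-graded dg vector space over a field k of characteristic zero which is acyclic (ker d = im d), and let B be a non-degenerate, homogeneous, graded ε-symmetric (ε = ±1) bilinear form on V compatible with d. Then there exists a graded subspace U of V which is an isotropic complement to im d: V = im d ⊕ U (internal direct sum) and B(u, u') = 0 for all u, u' ∈ U. -/
/-!
The image `L = im d` is isotropic, as `B (d x) (d y) = ± B x (d (d y)) = 0`, and by acyclicity it
has the dimension of any complement `W`. Choose `W` graded, which is possible because the grading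
projection is semisimple, and let `π` be the projection onto `W` along `L`. The subspace `U` of
those `v` with `2 B v = B (π v)` on `W` is the graph over `W` of `w ↦ l`, where `l ∈ L` is
determined by `B l = -½ B w` on `W`; non-degeneracy makes it a complement of `L`. Graded
ε-symmetry yields an operator `τ` preserving `W` with `B x y = B y (τ x)`, so both cross terms of
`B (w + l) (w' + l')` equal `-½ B w w'` and cancel `B w w'`. Finally `U` is graded because its
defining condition is compatible with the grading.
-/

open Module Module.End Submodule LinearMap

open Polynomial in
theorem Module.End.isSemisimple_of_isIdempotentElem {K M : Type*} [Field K] [AddCommGroup M]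
    [Module K M] {f : Module.End K M} (hf : IsIdempotentElem f) : f.IsSemisimple := by
  refine isSemisimple_of_squarefree_aeval_eq_zero (p := X * (X - C 1)) ?_ (by simp [mul_sub, hf.eq])
  have hcop : IsCoprime (X - C 0) (X - C (1 : K)) := isCoprime_X_sub_C_of_isUnit_sub (by simp)
  rw [map_zero, sub_zero] at hcop
  exact (separable_X.mul separable_X_sub_C hcop).squarefree

section Grading

variable {R M N : Type*} [CommRing R] [AddCommGroup M] [Module R M] [AddCommGroup N] [Module R N]
  {M₀ M₁ : Submodule R M}

theorem LinearMap.ext₂_of_codisjoint {B₁ B₂ : M →ₗ[R] M →ₗ[R] N} (h : Codisjoint M₀ M₁)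
    (h₀₀ : ∀ x ∈ M₀, ∀ y ∈ M₀, B₁ x y = B₂ x y) (h₀₁ : ∀ x ∈ M₀, ∀ y ∈ M₁, B₁ x y = B₂ x y)
    (h₁₀ : ∀ x ∈ M₁, ∀ y ∈ M₀, B₁ x y = B₂ x y) (h₁₁ : ∀ x ∈ M₁, ∀ y ∈ M₁, B₁ x y = B₂ x y) :
    B₁ = B₂ :=
  ext_on_codisjoint h (fun x hx => ext_on_codisjoint h (h₀₀ x hx) (h₀₁ x hx))
    (fun x hx => ext_on_codisjoint h (h₁₀ x hx) (h₁₁ x hx))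

theorem Submodule.invtSubmodule_projection_le (h : IsCompl M₀ M₁) :
    invtSubmodule (M₀.projection M₁ h) ≤ invtSubmodule (M₁.projection M₀ h.symm) := by
  intro p hp
  rw [mem_invtSubmodule_iff_forall_mem_of_mem] at hp ⊢
  intro x hx
  rw [projection_eq_self_sub_projection h]
  exact p.sub_mem hx (hp x hx)

theorem Submodule.eq_sup_inf_of_mem_invtSubmodule_projection (h : IsCompl M₀ M₁)
    {p : Submodule R M} (hp : p ∈ invtSubmodule (M₀.projection M₁ h)) : p = p ⊓ M₀ ⊔ p ⊓ M₁ := by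
  refine le_antisymm (fun x hx => ?_) (sup_le inf_le_left inf_le_left)
  rw [← projection_add_projection_eq_self h x]
  exact add_mem_sup ⟨(mem_invtSubmodule _).1 hp hx, projection_apply_mem h x⟩
    ⟨(mem_invtSubmodule _).1 (invtSubmodule_projection_le h hp) hx, projection_apply_mem h.symm x⟩

theorem LinearMap.range_mem_invtSubmodule_projection (h : IsCompl M₀ M₁) {d : M →ₗ[R] M}
    (hd₀ : ∀ x ∈ M₀, d x ∈ M₁) (hd₁ : ∀ x ∈ M₁, d x ∈ M₀) :
    range d ∈ invtSubmodule (M₀.projection M₁ h) := by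
  rw [mem_invtSubmodule_iff_forall_mem_of_mem]
  rintro _ ⟨x, rfl⟩
  refine ⟨M₁.projection M₀ h.symm x, ?_⟩
  conv_rhs => rw [← projection_add_projection_eq_self h x]
  rw [map_add, map_add, projection_apply_of_mem_right h (hd₀ _ (projection_apply_mem h x)),
    projection_apply_of_mem_left h (hd₁ _ (projection_apply_mem h.symm x)), zero_add]

end Grading

theorem finrank_eq_finrank_range_of_ker_eq_range {K V : Type*} [Field K] [AddCommGroup V]
    [Module K V] [FiniteDimensional K V] {d : V →ₗ[K] V} (hd : ker d = range d)
    {W : Submodule K V} (hW : IsCompl (range d) W) : finrank K W = finrank K (range d) := by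
  have h₁ := finrank_range_add_finrank_ker d
  have h₂ := finrank_add_eq_of_isCompl hW
  rw [hd] at h₁
  omega

section IsotropicComplement

variable {k V : Type*} [Field k] [AddCommGroup V] [Module k V] (B : V →ₗ[k] V →ₗ[k] k)
  {L W : Submodule k V} (hLW : IsCompl L W)

noncomputable def isotropicComplement : Submodule k V :=
  ker ((2 : k) • B.domRestrict₂ W - B.domRestrict₂ W ∘ₗ W.projection L hLW.symm)

variable {B hLW}

theorem mem_isotropicComplement {v : V} :
    v ∈ isotropicComplement B hLW ↔ ∀ x ∈ W, 2 * B v x = B (W.projection L hLW.symm v) x := by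
  simp only [isotropicComplement, mem_ker, LinearMap.ext_iff, LinearMap.sub_apply,
    LinearMap.smul_apply, LinearMap.comp_apply, smul_eq_mul, sub_eq_zero, Subtype.forall]
  exact Iff.rfl

theorem two_mul_apply_sub_projection_of_mem {u x : V} (hu : u ∈ isotropicComplement B hLW)
    (hx : x ∈ W) :
    2 * B (u - W.projection L hLW.symm u) x = -B (W.projection L hLW.symm u) x := by
  rw [map_sub, LinearMap.sub_apply, mul_sub, mem_isotropicComplement.1 hu x hx]
  ring

variable (hLW)

theorem disjoint_isotropicComplement [NeZero (2 : k)] (hL : ∀ x ∈ L, ∀ y ∈ L, B x y = 0)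
    (hB : B.SeparatingLeft) : Disjoint L (isotropicComplement B hLW) := by
  rw [Submodule.disjoint_def]
  intro x hxL hxU
  refine hB x fun y => ?_
  have hW : ∀ w ∈ W, B x w = 0 := fun w hw => by
    simpa [projection_apply_of_mem_right hLW.symm hxL, two_ne_zero] using
      mem_isotropicComplement.1 hxU w hw
  rw [← projection_add_projection_eq_self hLW.symm y, map_add, hW _ (projection_apply_mem _ y),
    hL x hxL _ (projection_apply_mem _ y), add_zero]

theorem isCompl_isotropicComplement [FiniteDimensional k V] [NeZero (2 : k)]
    (hL : ∀ x ∈ L, ∀ y ∈ L, B x y = 0) (hB : B.SeparatingLeft) (hdim : finrank k W ≤ finrank k L) :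
    IsCompl L (isotropicComplement B hLW) := by
  have hdisj := disjoint_isotropicComplement hLW hL hB
  refine ⟨hdisj, codisjoint_iff.2 (eq_top_of_finrank_eq (le_antisymm (finrank_le _) ?_))⟩
  set Ψ := (2 : k) • B.domRestrict₂ W - B.domRestrict₂ W ∘ₗ W.projection L hLW.symm
  have hker : finrank k (LinearMap.range Ψ) + finrank k (isotropicComplement B hLW) =
      finrank k V := LinearMap.finrank_range_add_finrank_ker Ψ
  have hrange : finrank k (LinearMap.range Ψ) ≤ finrank k W :=
    (finrank_le _).trans_eq (finrank_linearMap_self k k W)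
  have hsup := finrank_sup_add_finrank_inf_eq L (isotropicComplement B hLW)
  rw [disjoint_iff.1 hdisj, finrank_bot] at hsup
  omega

theorem isotropic_isotropicComplement [NeZero (2 : k)] (hL : ∀ x ∈ L, ∀ y ∈ L, B x y = 0)
    {τ : V →ₗ[k] V} (hτW : W ∈ invtSubmodule τ) (hτ : ∀ x y, B x y = B y (τ x)) :
    ∀ u ∈ isotropicComplement B hLW, ∀ u' ∈ isotropicComplement B hLW, B u u' = 0 := by
  intro u hu u' hu'
  set π := W.projection L hLW.symm
  have hw : π u ∈ W := projection_apply_mem _ u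
  have hw' : π u' ∈ W := projection_apply_mem _ u'
  have h₁ : 2 * B (u - π u) (π u') = -B (π u) (π u') := two_mul_apply_sub_projection_of_mem hu hw'
  have h₂ : 2 * B (π u) (u' - π u') = -B (π u) (π u') := by
    rw [hτ (π u), two_mul_apply_sub_projection_of_mem hu' ((mem_invtSubmodule _).1 hτW hw), ← hτ]
  have h₃ : B (u - π u) (u' - π u') = 0 :=
    hL _ (sub_projection_mem hLW.symm u) _ (sub_projection_mem hLW.symm u')
  have hsplit : B u u' = B (π u) (π u') + B (π u) (u' - π u') + B (u - π u) (π u')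
      + B (u - π u) (u' - π u') := by
    simp only [map_sub, LinearMap.sub_apply]
    ring
  have h₄ : (2 : k) * B u u' = 0 := by
    rw [hsplit]
    linear_combination h₁ + h₂ + 2 * h₃
  exact (mul_eq_zero.1 h₄).resolve_left two_ne_zero

theorem isotropicComplement_mem_invtSubmodule {f g : V →ₗ[k] V} (hfL : L ∈ invtSubmodule f)
    (hfW : W ∈ invtSubmodule f) (hgW : W ∈ invtSubmodule g)
    (hfg : ∀ x y, B (f x) y = B x (g y)) :
    isotropicComplement B hLW ∈ invtSubmodule f := by
  have hπf : Commute (W.projection L hLW.symm) f := (isIdempotentElem_projection _).commute_iff.2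
    ⟨by rwa [range_projection], by rwa [ker_projection]⟩
  rw [mem_invtSubmodule_iff_forall_mem_of_mem]
  intro u hu
  rw [mem_isotropicComplement] at hu ⊢
  intro x hx
  rw [hfg, hu _ ((mem_invtSubmodule _).1 hgW hx), ← hfg, ← Module.End.mul_apply f, ← hπf.eq,
    Module.End.mul_apply]

end IsotropicComplement

section GradedForm

variable {R V : Type*} [CommRing R] [AddCommGroup V] [Module R V] {V0 V1 : Submodule R V}
  {B : V →ₗ[R] V →ₗ[R] R}

theorem isotropic_range_of_graded_compatible (hgr : IsCompl V0 V1) {d : V →ₗ[R] V}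
    (hd2 : d ∘ₗ d = 0)
    (hBd0 : ∀ x ∈ V0, ∀ y, B (d x) y + B x (d y) = 0)
    (hBd1 : ∀ x ∈ V1, ∀ y, B (d x) y - B x (d y) = 0) :
    ∀ x ∈ LinearMap.range d, ∀ y ∈ LinearMap.range d, B x y = 0 := by
  rintro _ ⟨x, rfl⟩ _ ⟨y, rfl⟩
  have hddy : d (d y) = 0 := LinearMap.congr_fun hd2 y
  have h0 := hBd0 _ (projection_apply_mem hgr x) (d y)
  have h1 := hBd1 _ (projection_apply_mem hgr.symm x) (d y)
  rw [hddy, map_zero, add_zero] at h0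
  rw [hddy, map_zero, sub_zero] at h1
  rw [← projection_add_projection_eq_self hgr x, map_add, map_add, LinearMap.add_apply, h0, h1,
    add_zero]

theorem exists_graded_twist (hgr : IsCompl V0 V1)
    (hhom : ((∀ x ∈ V0, ∀ y ∈ V1, B x y = 0) ∧ (∀ x ∈ V1, ∀ y ∈ V0, B x y = 0)) ∨
            ((∀ x ∈ V0, ∀ y ∈ V0, B x y = 0) ∧ (∀ x ∈ V1, ∀ y ∈ V1, B x y = 0)))
    {ε : R} (hsym0 : ∀ x ∈ V0, ∀ y, B x y = ε * B y x)
    (hsym10 : ∀ x ∈ V1, ∀ y ∈ V0, B x y = ε * B y x)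
    (hsym11 : ∀ x ∈ V1, ∀ y ∈ V1, B x y = - ε * B y x) :
    ∃ τ : V →ₗ[R] V, invtSubmodule (V0.projection V1 hgr) ≤ invtSubmodule τ ∧
      ∀ x y, B x y = B y (τ x) := by
  rcases hhom with ⟨h01, h10⟩ | ⟨-, h11⟩
  · set τ := ε • (V0.projection V1 hgr - V1.projection V0 hgr.symm)
    have hτ0 : ∀ x ∈ V0, τ x = ε • x := fun x hx => by
      simp [τ, projection_apply_of_mem_left hgr hx, projection_apply_of_mem_right hgr.symm hx]
    have hτ1 : ∀ x ∈ V1, τ x = -(ε • x) := fun x hx => by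
      simp [τ, projection_apply_of_mem_right hgr hx, projection_apply_of_mem_left hgr.symm hx]
    refine ⟨τ, fun p hp => ?_, fun x y => LinearMap.congr_fun₂ (g := B.flip ∘ₗ τ)
      (LinearMap.ext₂_of_codisjoint hgr.codisjoint ?_ ?_ ?_ ?_) x y⟩
    · have hq := invtSubmodule_projection_le hgr hp
      rw [mem_invtSubmodule_iff_forall_mem_of_mem] at hp hq ⊢
      exact fun x hx => p.smul_mem ε (p.sub_mem (hp x hx) (hq x hx))
    all_goals intro x hx y hy
    · simp [hτ0 x hx, hsym0 x hx y]
    · simp [hτ0 x hx, h01 x hx y hy, h10 y hy x hx]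
    · simp [hτ1 x hx, h10 x hx y hy, h01 y hy x hx]
    · simp [hτ1 x hx, hsym11 x hx y hy]
  -- an odd form only pairs `V0` with `V1`, where the Koszul sign is `+1`
  · refine ⟨ε • LinearMap.id, fun p _ => ?_, fun x y => LinearMap.congr_fun₂
      (g := B.flip ∘ₗ (ε • LinearMap.id))
      (LinearMap.ext₂_of_codisjoint hgr.codisjoint ?_ ?_ ?_ ?_) x y⟩
    · rw [mem_invtSubmodule_iff_forall_mem_of_mem]
      exact fun x hx => p.smul_mem ε hx
    all_goals intro x hx y hy
    · simp [hsym0 x hx y]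
    · simp [hsym0 x hx y]
    · simp [hsym10 x hx y hy]
    · simp [h11 x hx y hy, h11 y hy x hx]

theorem exists_graded_adjoint_projection (hgr : IsCompl V0 V1)
    (hhom : ((∀ x ∈ V0, ∀ y ∈ V1, B x y = 0) ∧ (∀ x ∈ V1, ∀ y ∈ V0, B x y = 0)) ∨
            ((∀ x ∈ V0, ∀ y ∈ V0, B x y = 0) ∧ (∀ x ∈ V1, ∀ y ∈ V1, B x y = 0))) :
    ∃ g : V →ₗ[R] V, invtSubmodule (V0.projection V1 hgr) ≤ invtSubmodule g ∧
      ∀ x y, B (V0.projection V1 hgr x) y = B x (g y) := by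
  rcases hhom with ⟨h01, h10⟩ | ⟨h00, h11⟩
  · refine ⟨V0.projection V1 hgr, le_rfl, fun x y => LinearMap.congr_fun₂
      (f := B ∘ₗ V0.projection V1 hgr) (g := B.compl₂ (V0.projection V1 hgr))
      (LinearMap.ext₂_of_codisjoint hgr.codisjoint ?_ ?_ ?_ ?_) x y⟩
    all_goals intro x hx y hy
    all_goals simp [projection_apply_of_mem_left, projection_apply_of_mem_right, hx, hy, h01, h10]
  · refine ⟨V1.projection V0 hgr.symm, invtSubmodule_projection_le hgr, fun x y =>
      LinearMap.congr_fun₂ (f := B ∘ₗ V0.projection V1 hgr)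
      (g := B.compl₂ (V1.projection V0 hgr.symm))
      (LinearMap.ext₂_of_codisjoint hgr.codisjoint ?_ ?_ ?_ ?_) x y⟩
    all_goals intro x hx y hy
    all_goals simp [projection_apply_of_mem_left, projection_apply_of_mem_right, hx, hy, h00, h11]

end GradedForm

theorem isotropic_complement_exists_general
    {k V : Type*} [Field k] [CharZero k] [AddCommGroup V] [Module k V]
    [FiniteDimensional k V]
    -- ℤ/2-grading: V = V₀ ⊕ V₁
    (V0 V1 : Submodule k V) (hgr : IsCompl V0 V1)
    -- the differential: odd, square zero
    (d : V →ₗ[k] V) (hd2 : d ∘ₗ d = 0)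
    (hd01 : ∀ x ∈ V0, d x ∈ V1) (hd10 : ∀ x ∈ V1, d x ∈ V0)
    -- (V, d) is acyclic
    (hacyclic : LinearMap.ker d = LinearMap.range d)
    -- bilinear form compatible with d
    (B : V →ₗ[k] V →ₗ[k] k)
    (hBd0 : ∀ x ∈ V0, ∀ y, B (d x) y + B x (d y) = 0)
    (hBd1 : ∀ x ∈ V1, ∀ y, B (d x) y - B x (d y) = 0)
    -- B is homogeneous: either even or odd
    (hhom : ((∀ x ∈ V0, ∀ y ∈ V1, B x y = 0) ∧ (∀ x ∈ V1, ∀ y ∈ V0, B x y = 0)) ∨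
            ((∀ x ∈ V0, ∀ y ∈ V0, B x y = 0) ∧ (∀ x ∈ V1, ∀ y ∈ V1, B x y = 0)))
    -- B is graded ε-symmetric, ε = ±1: B(x,y) = ε (−1)^{|x||y|} B(y,x)
    (ε : k)
    (hsym0 : ∀ x ∈ V0, ∀ y, B x y = ε * B y x)
    (hsym10 : ∀ x ∈ V1, ∀ y ∈ V0, B x y = ε * B y x)
    (hsym11 : ∀ x ∈ V1, ∀ y ∈ V1, B x y = - ε * B y x)
    -- B is non-degenerate
    (hnd : ∀ x : V, x ≠ 0 → ∃ y, B x y ≠ 0) :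
    ∃ U : Submodule k V,
      -- U is graded
      U = (U ⊓ V0) ⊔ (U ⊓ V1) ∧
      -- V = im d ⊕ U (internal direct sum)
      LinearMap.range d ⊔ U = ⊤ ∧
      Disjoint (LinearMap.range d) U ∧
      -- U is isotropic
      (∀ u ∈ U, ∀ u' ∈ U, B u u' = 0) := by
  have hLP : LinearMap.range d ∈ invtSubmodule (V0.projection V1 hgr) :=
    range_mem_invtSubmodule_projection hgr hd01 hd10
  obtain ⟨W, hWP, hLW⟩ :=
    isSemisimple_iff.1 (isSemisimple_of_isIdempotentElem (isIdempotentElem_projection hgr)) _ hLP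
  obtain ⟨τ, hτP, hτ⟩ := exists_graded_twist hgr hhom hsym0 hsym10 hsym11
  obtain ⟨g, hgP, hg⟩ := exists_graded_adjoint_projection hgr hhom
  have hL := isotropic_range_of_graded_compatible hgr hd2 hBd0 hBd1
  have hB : B.SeparatingLeft := fun x hx => by_contra fun hx0 => (hnd x hx0).choose_spec (hx _)
  have hU := isCompl_isotropicComplement hLW hL hB
    (finrank_eq_finrank_range_of_ker_eq_range hacyclic hLW).le
  refine ⟨isotropicComplement B hLW, eq_sup_inf_of_mem_invtSubmodule_projection hgr ?_,
    codisjoint_iff.1 hU.codisjoint, hU.disjoint, isotropic_isotropicComplement hLW hL (hτP hWP) hτ⟩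
  exact isotropicComplement_mem_invtSubmodule hLW hLP hWP (hgP hWP) hg

/-- A finite-dimensional acyclic ℤ/2-graded dg vector space `(V, d)`
over a field of characteristic zero with a non-degenerate, homogeneous, graded
ε-symmetric bilinear form `B` compatible with `d` admits a graded isotropic
complement `U` to `im d`: `V = im d ⊕ U` and `B` vanishes on `U × U`. -/
theorem isotropic_complement_exists
    {k V : Type*} [Field k] [CharZero k] [AddCommGroup V] [Module k V]
    [FiniteDimensional k V]
    -- ℤ/2-grading: V = V₀ ⊕ V₁
    (V0 V1 : Submodule k V) (hgr : IsCompl V0 V1)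
    -- the differential: odd, square zero
    (d : V →ₗ[k] V) (hd2 : d ∘ₗ d = 0)
    (hd01 : ∀ x ∈ V0, d x ∈ V1) (hd10 : ∀ x ∈ V1, d x ∈ V0)
    -- (V, d) is acyclic
    (hacyclic : LinearMap.ker d = LinearMap.range d)
    -- bilinear form compatible with d
    (B : V →ₗ[k] V →ₗ[k] k)
    (hBd0 : ∀ x ∈ V0, ∀ y, B (d x) y + B x (d y) = 0)
    (hBd1 : ∀ x ∈ V1, ∀ y, B (d x) y - B x (d y) = 0)
    -- B is homogeneous: either even or odd
    (hhom : ((∀ x ∈ V0, ∀ y ∈ V1, B x y = 0) ∧ (∀ x ∈ V1, ∀ y ∈ V0, B x y = 0)) ∨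
            ((∀ x ∈ V0, ∀ y ∈ V0, B x y = 0) ∧ (∀ x ∈ V1, ∀ y ∈ V1, B x y = 0)))
    -- B is graded ε-symmetric, ε = ±1: B(x,y) = ε (−1)^{|x||y|} B(y,x)
    (ε : k) (hε : ε = 1 ∨ ε = -1)
    (hsym0 : ∀ x ∈ V0, ∀ y, B x y = ε * B y x)
    (hsym10 : ∀ x ∈ V1, ∀ y ∈ V0, B x y = ε * B y x)
    (hsym11 : ∀ x ∈ V1, ∀ y ∈ V1, B x y = - ε * B y x)
    -- B is non-degenerate
    (hnd : ∀ x : V, x ≠ 0 → ∃ y, B x y ≠ 0) :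
    ∃ U : Submodule k V,
      -- U is graded
      U = (U ⊓ V0) ⊔ (U ⊓ V1) ∧
      -- V = im d ⊕ U (internal direct sum)
      LinearMap.range d ⊔ U = ⊤ ∧
      Disjoint (LinearMap.range d) U ∧
      -- U is isotropic
      (∀ u ∈ U, ∀ u' ∈ U, B u u' = 0) :=
  isotropic_complement_exists_general V0 V1 hgr d hd2 hd01 hd10 hacyclic B hBd0 hBd1 hhom ε hsym0
    hsym10 hsym11 hnd
end
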